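/- Value of the invariant on the curve of initial conditions: let α, β be complex numbers in the open unit disk, set ρ = √(1−|α|²), σ = √(1−|β|²), K = 2(1 − Re(ᾱβ)). Let w ∈ ℂ with |w| = 1 and let η ∈ ℝ satisfy η² = 2 + 2 Re w. Then I(η/(2ρ), η/(2σ), K/(2ρσ)) = Re w · (1/(2ρ²) + 1/(2σ²) − K/(2ρ²σ²)) + (K² − 2K)/(4ρ²σ²) + 1/(2σ²) + 1/(2ρ²) − 1. In particular the invariant of the curve of initial conditions γ_{α,β}(w) = (η/(2ρ), η/(2σ), K/(2ρσ)) is real and is an affine function of Re w. -/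

import Mathlib

/-- The Fricke–Vogt invariant. -/
noncomputable def frickeVogt : ℝ × ℝ × ℝ → ℝ :=
  fun p => p.1 ^ 2 + p.2.1 ^ 2 + p.2.2 ^ 2 - 2 * p.1 * p.2.1 * p.2.2 - 1

theorem invariant_on_curve_of_initial_conditions_general
    (ρ σ K : ℝ)
    (w : ℂ) (η : ℝ) (hη : η ^ 2 = 2 + 2 * w.re) :
    frickeVogt (η / (2 * ρ), η / (2 * σ), K / (2 * ρ * σ)) =
      w.re * (1 / (2 * ρ ^ 2) + 1 / (2 * σ ^ 2) - K / (2 * ρ ^ 2 * σ ^ 2)) +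
        (K ^ 2 - 2 * K) / (4 * ρ ^ 2 * σ ^ 2) + 1 / (2 * σ ^ 2) + 1 / (2 * ρ ^ 2) - 1 := by
  simp only [frickeVogt]
  -- Both sides are polynomials in `η, ρ⁻¹, σ⁻¹`; `η` enters the left one only through `η²`,
  -- with the coefficient below.
  linear_combination (1 / (4 * ρ ^ 2) + 1 / (4 * σ ^ 2) - K / (4 * ρ ^ 2 * σ ^ 2)) * hη

theorem invariant_on_curve_of_initial_conditions
    (α β : ℂ) (hα : ‖α‖ < 1) (hβ : ‖β‖ < 1)
    (ρ σ K : ℝ)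
    (hρ : ρ = Real.sqrt (1 - ‖α‖ ^ 2))
    (hσ : σ = Real.sqrt (1 - ‖β‖ ^ 2))
    (hK : K = 2 * (1 - ((starRingEnd ℂ) α * β).re))
    (w : ℂ) (hw : ‖w‖ = 1) (η : ℝ) (hη : η ^ 2 = 2 + 2 * w.re) :
    frickeVogt (η / (2 * ρ), η / (2 * σ), K / (2 * ρ * σ)) =
      w.re * (1 / (2 * ρ ^ 2) + 1 / (2 * σ ^ 2) - K / (2 * ρ ^ 2 * σ ^ 2)) +
        (K ^ 2 - 2 * K) / (4 * ρ ^ 2 * σ ^ 2) + 1 / (2 * σ ^ 2) + 1 / (2 * ρ ^ 2) - 1 :=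
  invariant_on_curve_of_initial_conditions_general ρ σ K w η hη
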